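/- arXiv:1301.3277 — 4 statements merged into one kernel-verified Lean document; each statement's English description precedes it below -/
import Mathlib

section
/- Any two S-normal decompositions of the same element of a left-cancellative monoid with no nontrivial invertible elements, after discarding trailing identity entries, are equal: if (a1,...,ap) and (b1,...,bp) are S-normal decompositions of g with all entries non-identity, then p = q and ai = bi for all i. -/
/-- A pair `(g1, g2)` is `S`-greedy. -/
def SGreedy {M : Type*} [Monoid M] (S : Set M) (g1 g2 : M) : Prop :=
  ∀ a ∈ S, ∀ f : M, (∃ z, a * z = f * g1 * g2) → ∃ z, a * z = f * g1

/-- A list is `S`-normal: adjacent pairs are `S`-greedy and entries lie in `S ∪ {1}`. -/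
def SNormal {M : Type*} [Monoid M] (S : Set M) (l : List M) : Prop :=
  l.Chain' (SGreedy S) ∧ ∀ x ∈ l, x ∈ S ∨ x = 1

/-!
Both decompositions start with an element of `S` that left-divides `g`. Greediness propagates
along an `S`-normal sequence, so an element of `S` dividing the whole product already divides
its first entry; hence the two first entries divide each other. Without nontrivial invertible
elements, left cancellation makes them equal, we cancel them, and induct on the length.
-/

section SNormal

variable {M : Type*} [Monoid M] {S : Set M}

theorem prefix_mul_head_of_chain_sGreedy {g : M} {l : List M}
    (hc : (g :: l).IsChain (SGreedy S)) {a : M} (ha : a ∈ S) {f : M}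
    (h : ∃ z, a * z = f * (g :: l).prod) : ∃ z, a * z = f * g := by
  induction l generalizing g f with
  | nil => simpa using h
  | cons g' l ih =>
    obtain ⟨hgr, hc'⟩ := List.isChain_cons_cons.mp hc
    refine hgr a ha f (ih hc' ?_)
    simpa only [List.prod_cons, mul_assoc] using h

theorem eq_of_mul_eq_of_mul_eq (hcancel : ∀ f g g' : M, f * g = f * g' → g = g')
    (hnu : ∀ x y : M, x * y = 1 → x = 1 ∧ y = 1) {a b z w : M}
    (hz : a * z = b) (hw : b * w = a) : a = b := by
  have hzw : z * w = 1 := hcancel a _ _ (by rw [← mul_assoc, hz, hw, mul_one])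
  rw [← hz, (hnu z w hzw).1, mul_one]

theorem List.eq_nil_of_prod_eq_one_of_ne_one (hnu : ∀ x y : M, x * y = 1 → x = 1 ∧ y = 1)
    {l : List M} (hn : ∀ x ∈ l, x ≠ 1) (h : l.prod = 1) : l = [] := by
  cases l with
  | nil => rfl
  | cons x l =>
    rw [List.prod_cons] at h
    exact absurd (hnu x _ h).1 (hn x List.mem_cons_self)

theorem SNormal.tail {x : M} {l : List M} (h : SNormal S (x :: l)) : SNormal S l :=
  ⟨h.1.tail, fun y hy => h.2 y (List.mem_cons_of_mem _ hy)⟩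

theorem SNormal.head_mem {x : M} {l : List M} (h : SNormal S (x :: l)) (hx : x ≠ 1) : x ∈ S :=
  (h.2 x List.mem_cons_self).resolve_right hx

theorem SNormal.head_eq (hcancel : ∀ f g g' : M, f * g = f * g' → g = g')
    (hnu : ∀ x y : M, x * y = 1 → x = 1 ∧ y = 1) {a b : M} {r₁ r₂ : List M}
    (h₁ : SNormal S (a :: r₁)) (h₂ : SNormal S (b :: r₂)) (ha : a ∈ S) (hb : b ∈ S)
    (h : a * r₁.prod = b * r₂.prod) : a = b := by
  obtain ⟨z, hz⟩ := prefix_mul_head_of_chain_sGreedy (f := 1) h₂.1 ha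
    ⟨r₁.prod, by rw [List.prod_cons, one_mul, h]⟩
  obtain ⟨w, hw⟩ := prefix_mul_head_of_chain_sGreedy (f := 1) h₁.1 hb
    ⟨r₂.prod, by rw [List.prod_cons, one_mul, h]⟩
  rw [one_mul] at hz hw
  exact eq_of_mul_eq_of_mul_eq hcancel hnu hz hw

theorem SNormal.eq_of_prod_eq (hcancel : ∀ f g g' : M, f * g = f * g' → g = g')
    (hnu : ∀ x y : M, x * y = 1 → x = 1 ∧ y = 1) {l₁ l₂ : List M}
    (h₁ : SNormal S l₁) (h₂ : SNormal S l₂) (hn₁ : ∀ x ∈ l₁, x ≠ 1) (hn₂ : ∀ x ∈ l₂, x ≠ 1)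
    (h : l₁.prod = l₂.prod) : l₁ = l₂ := by
  induction l₁ generalizing l₂ with
  | nil => exact (List.eq_nil_of_prod_eq_one_of_ne_one hnu hn₂ h.symm).symm
  | cons a r₁ ih =>
    cases l₂ with
    | nil => exact List.eq_nil_of_prod_eq_one_of_ne_one hnu hn₁ h
    | cons b r₂ =>
      rw [List.prod_cons, List.prod_cons] at h
      have ha := h₁.head_mem (hn₁ a List.mem_cons_self)
      have hb := h₂.head_mem (hn₂ b List.mem_cons_self)
      obtain rfl := h₁.head_eq hcancel hnu h₂ ha hb h
      rw [ih h₁.tail h₂.tail (fun x hx => hn₁ x (List.mem_cons_of_mem _ hx))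
        (fun x hx => hn₂ x (List.mem_cons_of_mem _ hx)) (hcancel a _ _ h)]

end SNormal

/-- In a left-cancellative monoid with no nontrivial invertible elements, two
`S`-normal decompositions of the same element all of whose entries are
non-identity must coincide. -/
theorem SNormal_decomposition_unique (M : Type*) [Monoid M]
    (hcancel : ∀ f g g' : M, f * g = f * g' → g = g')
    (hnu : ∀ x y : M, x * y = 1 → x = 1 ∧ y = 1)
    (S : Set M) (g : M) (l1 l2 : List M)
    (h1 : SNormal S l1) (h2 : SNormal S l2)
    (hp1 : l1.prod = g) (hp2 : l2.prod = g)
    (hn1 : ∀ x ∈ l1, x ≠ 1) (hn2 : ∀ x ∈ l2, x ≠ 1) :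
    l1 = l2 :=
  h1.eq_of_prod_eq hcancel hnu h2 hn1 hn2 (hp1.trans hp2.symm)
end

section
/- Let C be a left-cancellative monoid and S a subset such that S ∪ {1} generates C and every element of (S ∪ {1})² admits an S-normal decomposition of length two. Then every element of C admits an S-normal decomposition (i.e., S is a Garside family). -/
section

variable {M : Type*} [Monoid M] {S : Set M}

theorem sGreedy_one_right (g : M) : SGreedy S g 1 := by
  intro a _ f ha
  simpa using ha

/-- The first domino rule. -/
theorem SGreedy.domino {f g h a₁ f₁ y r : M} (hgh : SGreedy S g h) (ha₁f₁ : SGreedy S a₁ f₁)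
    (hfg : a₁ * f₁ = f * g) (hy : y * r = f₁ * h) : SGreedy S a₁ y := by
  rintro a ha c ⟨z, hz⟩
  have hcfgh : a * (z * r) = c * f * g * h := by
    rw [← mul_assoc, hz, mul_assoc _ y, hy, ← mul_assoc, mul_assoc c, hfg, ← mul_assoc]
  obtain ⟨w, hw⟩ := hgh a ha (c * f) ⟨z * r, hcfgh⟩
  exact ha₁f₁ a ha c ⟨w, by rw [hw, mul_assoc c a₁, hfg, ← mul_assoc]⟩

theorem sNormal_iff {l : List M} :
    SNormal S l ↔ l.IsChain (SGreedy S) ∧ ∀ x ∈ l, x ∈ S ∨ x = 1 :=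
  Iff.rfl

theorem sNormal_nil : SNormal S [] :=
  sNormal_iff.mpr ⟨List.isChain_nil, by simp⟩

theorem sNormal_cons_iff {g : M} {t : List M} :
    SNormal S (g :: t) ↔ (∀ y ∈ t.head?, SGreedy S g y) ∧ (g ∈ S ∨ g = 1) ∧ SNormal S t := by
  simp only [sNormal_iff, List.isChain_cons, List.forall_mem_cons]
  tauto

theorem SNormal.sGreedy_headD {g : M} {t : List M} (hn : SNormal S (g :: t)) :
    SGreedy S g (t.headD 1) := by
  cases t with
  | nil => exact sGreedy_one_right g
  | cons h _ => exact (sNormal_cons_iff.mp hn).1 h rfl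

/-- The clause on heads is the invariant that lets the domino rule apply in the induction. -/
theorem SNormal.exists_sNormal_mul
    (hsq : ∀ x y : M, (x ∈ S ∨ x = 1) → (y ∈ S ∨ y = 1) →
      ∃ b₁ b₂ : M, (b₁ ∈ S ∨ b₁ = 1) ∧ (b₂ ∈ S ∨ b₂ = 1) ∧ SGreedy S b₁ b₂ ∧ b₁ * b₂ = x * y)
    {l : List M} (hl : SNormal S l) {f : M} (hf : f ∈ S ∨ f = 1) :
    ∃ l' : List M, SNormal S l' ∧ l'.prod = f * l.prod ∧
      ∃ r, l'.headD 1 * r = f * l.headD 1 := by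
  induction l generalizing f with
  | nil => exact ⟨[f], sNormal_cons_iff.mpr ⟨by simp, hf, sNormal_nil⟩, by simp, 1, by simp⟩
  | cons g t ih =>
    obtain ⟨-, hg, ht⟩ := sNormal_cons_iff.mp hl
    obtain ⟨a₁, f₁, ha₁, hf₁, ha₁f₁, hfg⟩ := hsq f g hf hg
    obtain ⟨l', hl', hprod, r, hr⟩ := ih ht hf₁
    have hgreedy : SGreedy S a₁ (l'.headD 1) := hl.sGreedy_headD.domino ha₁f₁ hfg hr
    refine ⟨a₁ :: l', sNormal_cons_iff.mpr ⟨?_, ha₁, hl'⟩, ?_, f₁, by simpa using hfg⟩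
    · intro y hy
      rwa [List.headD_eq_head?_getD, hy] at hgreedy
    · rw [List.prod_cons, List.prod_cons, hprod, ← mul_assoc, hfg, mul_assoc]

theorem exists_sNormal_prod_eq
    (hsq : ∀ x y : M, (x ∈ S ∨ x = 1) → (y ∈ S ∨ y = 1) →
      ∃ b₁ b₂ : M, (b₁ ∈ S ∨ b₁ = 1) ∧ (b₂ ∈ S ∨ b₂ = 1) ∧ SGreedy S b₁ b₂ ∧ b₁ * b₂ = x * y)
    {l : List M} (hl : ∀ x ∈ l, x ∈ S ∨ x = 1) :
    ∃ l' : List M, SNormal S l' ∧ l'.prod = l.prod := by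
  induction l with
  | nil => exact ⟨[], sNormal_nil, rfl⟩
  | cons f t ih =>
    obtain ⟨hf, ht⟩ := List.forall_mem_cons.mp hl
    obtain ⟨l', hl', hprod⟩ := ih ht
    obtain ⟨l'', hl'', hprod', -⟩ := hl'.exists_sNormal_mul hsq hf
    exact ⟨l'', hl'', by rw [hprod', hprod, List.prod_cons]⟩

end

theorem garside_family_of_length_two_general (M : Type*) [Monoid M]
    (S : Set M)
    (hgen : ∀ g : M, ∃ l : List M, (∀ x ∈ l, x ∈ S ∨ x = 1) ∧ l.prod = g)
    (hsq : ∀ x y : M, (x ∈ S ∨ x = 1) → (y ∈ S ∨ y = 1) →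
      ∃ b1 b2 : M, (b1 ∈ S ∨ b1 = 1) ∧ (b2 ∈ S ∨ b2 = 1) ∧
        SGreedy S b1 b2 ∧ b1 * b2 = x * y) :
    ∀ g : M, ∃ l : List M, SNormal S l ∧ l.prod = g := by
  intro g
  obtain ⟨l, hl, rfl⟩ := hgen g
  exact exists_sNormal_prod_eq hsq hl

/-- If `S ∪ {1}` generates a left-cancellative right-Noetherian monoid with no
nontrivial invertible elements, and every element of `(S ∪ {1})²` admits an
`S`-normal decomposition of length two, then every element admits an
`S`-normal decomposition: `S` is a Garside family. -/
theorem garside_family_of_length_two (M : Type*) [Monoid M]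
    (hcancel : ∀ f g g' : M, f * g = f * g' → g = g')
    (hnu : ∀ x y : M, x * y = 1 → x = 1 ∧ y = 1)
    (hnoeth : WellFounded (fun g h : M => ∃ f, ¬ IsUnit f ∧ h = f * g))
    (S : Set M)
    (hgen : ∀ g : M, ∃ l : List M, (∀ x ∈ l, x ∈ S ∨ x = 1) ∧ l.prod = g)
    (hsq : ∀ x y : M, (x ∈ S ∨ x = 1) → (y ∈ S ∨ y = 1) →
      ∃ b1 b2 : M, (b1 ∈ S ∨ b1 = 1) ∧ (b2 ∈ S ∨ b2 = 1) ∧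
        SGreedy S b1 b2 ∧ b1 * b2 = x * y) :
    ∀ g : M, ∃ l : List M, SNormal S l ∧ l.prod = g :=
  garside_family_of_length_two_general M S hgen hsq
end

section
/- In a left-cancellative monoid, if g1 f' is a right-lcm of f and g1, and g2 f'' is a right-lcm of f' and g2, then g1 g2 f'' is a right-lcm of f and g1 g2. -/
/-! Left multiplication by the cancellable element `g1` carries the right-lcm `g2 * f''` of `f'`
and `g2` to a right-lcm `g1 * (g2 * f'')` of `g1 * f'` and `g1 * g2`. Since `g1 ∣ g1 * g2`, every
common multiple of `f` and `g1 * g2` is a multiple of the right-lcm `g1 * f'` of `f` and `g1`, so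
the two lcm squares compose. -/

/-- `h` is a right-lcm of `f` and `g`. -/
def IsRightLcm {M : Type*} [Monoid M] (f g h : M) : Prop :=
  (∃ z, f * z = h) ∧ (∃ z, g * z = h) ∧
    ∀ k, (∃ z, f * z = k) → (∃ z, g * z = k) → ∃ z, h * z = k

namespace IsRightLcm

variable {M : Type*} [Monoid M] {f g h : M}

-- In a noncommutative monoid `a ∣ b` means `∃ c, b = a * c`, i.e. `a ⪯ b`.
theorem iff_dvd : IsRightLcm f g h ↔ f ∣ h ∧ g ∣ h ∧ ∀ k, f ∣ k → g ∣ k → h ∣ k := by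
  simp only [IsRightLcm, Dvd.dvd, eq_comm]

theorem mul_left {a : M} (ha : IsLeftRegular a) (hl : IsRightLcm f g h) :
    IsRightLcm (a * f) (a * g) (a * h) := by
  obtain ⟨hf, hg, hmin⟩ := iff_dvd.mp hl
  refine iff_dvd.mpr ⟨mul_dvd_mul_left a hf, mul_dvd_mul_left a hg, ?_⟩
  intro k hfk hgk
  obtain ⟨c, rfl⟩ := (dvd_mul_right a g).trans hgk
  rw [ha.dvd_cancel_left] at hfk hgk ⊢
  exact hmin c hfk hgk

theorem trans_of_dvd {g₁ m₁ : M} (h₁ : IsRightLcm f g₁ m₁) (hg : g₁ ∣ g)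
    (h₂ : IsRightLcm m₁ g h) : IsRightLcm f g h := by
  obtain ⟨hf₁, -, hmin₁⟩ := iff_dvd.mp h₁
  obtain ⟨hm₁, hg₂, hmin₂⟩ := iff_dvd.mp h₂
  exact iff_dvd.mpr ⟨hf₁.trans hm₁, hg₂, fun k hfk hgk ↦
    hmin₂ k (hmin₁ k hfk (hg.trans hgk)) hgk⟩

end IsRightLcm

/-- In a left-cancellative monoid, if `g1 * f'` is a right-lcm of `f` and `g1`,
and `g2 * f''` is a right-lcm of `f'` and `g2`, then `g1 * g2 * f''` is a
right-lcm of `f` and `g1 * g2`. -/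
theorem rightLcm_iterated (M : Type*) [Monoid M]
    (hcancel : ∀ f g g' : M, f * g = f * g' → g = g')
    (f g1 g2 f' f'' : M)
    (h1 : IsRightLcm f g1 (g1 * f'))
    (h2 : IsRightLcm f' g2 (g2 * f'')) :
    IsRightLcm f (g1 * g2) (g1 * (g2 * f'')) :=
  h1.trans_of_dvd (dvd_mul_right g1 g2) (h2.mul_left fun _ _ ↦ hcancel g1 _ _)
end

section
/- In the 3-strand braid monoid B3+ presented by generators a, b and the single relation aba = bab, the set S = {1, a, b, ab, ba, aba} is closed under right-lcm and right-complement: for any two elements x, y of S admitting a common right-multiple, their right-lcm x ∨ y and the complement x \ (x ∨ y) (the element z with x z = x ∨ y) both lie in S. -/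
/-- The braid relation `aba = bab` on the free monoid on two generators. -/
def braidRel : FreeMonoid (Fin 2) → FreeMonoid (Fin 2) → Prop := fun u v =>
  u = FreeMonoid.of 0 * FreeMonoid.of 1 * FreeMonoid.of 0 ∧
  v = FreeMonoid.of 1 * FreeMonoid.of 0 * FreeMonoid.of 1

/-- The 3-strand braid monoid `B3⁺ = ⟨a, b | aba = bab⟩`. -/
abbrev BraidMonoid3 := (conGen braidRel).Quotient

/-!
The elements of `S` are the prefixes of the alternating words `aba` and `bab`, and these two words
are the same element `Δ`. Two prefixes of one alternating word are comparable for left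
divisibility, so the longer one is their right-lcm. Otherwise one starts with `a`, the other with
`b`, and both divide `Δ`, so their right-lcm is `Δ` as soon as `a ∨ b = Δ`. This is where the word
problem enters: along a chain of `aba ↔ bab` rewrites from `a u` to `b v` the leading `a` stays in
place until a rewrite at the head, which needs `u` to have become `ba⋯`; so every common
right-multiple of `a` and `b` is a right-multiple of `aba`.
-/

open Relation

section IsRightLcm

variable {M : Type*} [Monoid M] {f g h : M}

theorem isRightLcm_iff_dvd :
    IsRightLcm f g h ↔ f ∣ h ∧ g ∣ h ∧ ∀ k, f ∣ k → g ∣ k → h ∣ k := by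
  simp only [IsRightLcm, dvd_def, eq_comm]

theorem IsRightLcm.symm (hl : IsRightLcm f g h) : IsRightLcm g f h :=
  ⟨hl.2.1, hl.1, fun k hf hg => hl.2.2 k hg hf⟩

theorem IsRightLcm.of_dvd (hfg : f ∣ g) : IsRightLcm f g g :=
  isRightLcm_iff_dvd.2 ⟨hfg, dvd_rfl, fun _ _ hg => hg⟩

theorem IsRightLcm.of_dvd_of_dvd {f' g' : M} (hl : IsRightLcm f g h) (hf : f ∣ f') (hg : g ∣ g')
    (hf' : f' ∣ h) (hg' : g' ∣ h) : IsRightLcm f' g' h :=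
  isRightLcm_iff_dvd.2 ⟨hf', hg', fun k hk hk' =>
    (isRightLcm_iff_dvd.1 hl).2.2 k (hf.trans hk) (hg.trans hk')⟩

end IsRightLcm

inductive BraidStep : List (Fin 2) → List (Fin 2) → Prop
  | fwd (p q : List (Fin 2)) : BraidStep (p ++ [0, 1, 0] ++ q) (p ++ [1, 0, 1] ++ q)
  | bwd (p q : List (Fin 2)) : BraidStep (p ++ [1, 0, 1] ++ q) (p ++ [0, 1, 0] ++ q)

namespace BraidStep

variable {u v : List (Fin 2)}

theorem symm (h : BraidStep u v) : BraidStep v u := by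
  cases h with
  | fwd p q => exact bwd p q
  | bwd p q => exact fwd p q

instance : Std.Symm BraidStep := ⟨fun _ _ => symm⟩

theorem append_left (t : List (Fin 2)) (h : BraidStep u v) : BraidStep (t ++ u) (t ++ v) := by
  cases h with
  | fwd p q => simpa only [List.append_assoc] using fwd (t ++ p) q
  | bwd p q => simpa only [List.append_assoc] using bwd (t ++ p) q

theorem append_right (t : List (Fin 2)) (h : BraidStep u v) : BraidStep (u ++ t) (v ++ t) := by
  cases h with
  | fwd p q => simpa only [List.append_assoc] using fwd p (q ++ t)
  | bwd p q => simpa only [List.append_assoc] using bwd p (q ++ t)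

theorem conGen_braidRel (h : BraidStep u v) :
    conGen braidRel (FreeMonoid.ofList u) (FreeMonoid.ofList v) := by
  have hrel : conGen braidRel (FreeMonoid.ofList [0, 1, 0]) (FreeMonoid.ofList [1, 0, 1]) :=
    ConGen.Rel.of _ _ ⟨rfl, rfl⟩
  cases h with
  | fwd p q => exact ((conGen braidRel).mul ((conGen braidRel).mul
      ((conGen braidRel).refl _) hrel) ((conGen braidRel).refl _))
  | bwd p q => exact ((conGen braidRel).mul ((conGen braidRel).mul
      ((conGen braidRel).refl _) ((conGen braidRel).symm hrel)) ((conGen braidRel).refl _))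

theorem cons_left {x : Fin 2} (h : BraidStep (x :: u) v) :
    (∃ u', v = x :: u' ∧ BraidStep u u') ∨ ∃ q, u = (x + 1) :: x :: q := by
  generalize hw : x :: u = w at h
  cases h with
  | fwd p q =>
    cases p with
    | nil => cases hw; exact .inr ⟨q, rfl⟩
    | cons c p => cases hw; exact .inl ⟨_, rfl, fwd p q⟩
  | bwd p q =>
    cases p with
    | nil => cases hw; exact .inr ⟨q, rfl⟩
    | cons c p => cases hw; exact .inl ⟨_, rfl, bwd p q⟩

end BraidStep

theorem conGen_braidRel_of_reflTransGen {u v : List (Fin 2)} (h : ReflTransGen BraidStep u v) :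
    conGen braidRel (FreeMonoid.ofList u) (FreeMonoid.ofList v) := by
  induction h with
  | refl => exact (conGen braidRel).refl _
  | tail _ hs ih => exact (conGen braidRel).trans ih hs.conGen_braidRel

theorem reflTransGen_braidStep_iff {x y : FreeMonoid (Fin 2)} :
    ReflTransGen BraidStep x.toList y.toList ↔ conGen braidRel x y := by
  refine ⟨conGen_braidRel_of_reflTransGen, fun h => ?_⟩
  induction h with
  | of x y h => obtain ⟨rfl, rfl⟩ := h; exact .single (BraidStep.fwd [] [])
  | refl => exact .refl
  | symm _ ih => exact Std.Symm.symm _ _ ih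
  | trans _ _ ih₁ ih₂ => exact ih₁.trans ih₂
  | mul _ _ ih₁ ih₂ =>
    exact (ih₁.lift _ fun _ _ h => h.append_right _).trans (ih₂.lift _ fun _ _ h => h.append_left _)

theorem exists_tail_of_reflTransGen_cons {x : Fin 2} {u v : List (Fin 2)}
    (h : ReflTransGen BraidStep (x :: u) ((x + 1) :: v)) :
    ∃ q, ReflTransGen BraidStep u ((x + 1) :: x :: q) := by
  generalize hw : x :: u = w at h
  induction h using ReflTransGen.head_induction_on generalizing u with
  | refl => exact absurd (List.cons.inj hw).1 (left_ne_add.2 one_ne_zero)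
  | head hs _ ih =>
    subst hw
    rcases hs.cons_left with ⟨u', rfl, hu⟩ | ⟨q, rfl⟩
    · obtain ⟨q, hq⟩ := ih rfl
      exact ⟨q, hq.head hu⟩
    · exact ⟨q, .refl⟩

open scoped Fin.NatCast

namespace BraidMonoid3

def σ (s : Fin 2) : BraidMonoid3 := (conGen braidRel).mk' (FreeMonoid.of s)

def alternating (s : Fin 2) : ℕ → BraidMonoid3
  | 0 => 1
  | n + 1 => σ s * alternating (s + 1) n

def delta : BraidMonoid3 := alternating 0 3

def simples : Set BraidMonoid3 := {x | ∃ s, ∃ i ≤ 3, alternating s i = x}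

theorem σ_add_one_mul_σ_dvd_of_σ_mul_eq {s : Fin 2} {y z : BraidMonoid3}
    (h : σ s * y = σ (s + 1) * z) : σ (s + 1) * σ s ∣ y := by
  obtain ⟨u, rfl⟩ := Con.mk'_surjective y
  obtain ⟨v, rfl⟩ := Con.mk'_surjective z
  have huv : conGen braidRel (.of s * u) (.of (s + 1) * v) := (Con.eq _).1 (by simpa [σ] using h)
  obtain ⟨q, hq⟩ := exists_tail_of_reflTransGen_cons (reflTransGen_braidStep_iff.2 huv)
  refine ⟨(conGen braidRel).mk' (.ofList q), ?_⟩
  have := (Con.eq _).2 (conGen_braidRel_of_reflTransGen hq)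
  simpa [σ, mul_assoc] using this

theorem alternating_add (s : Fin 2) (m n : ℕ) :
    alternating s (m + n) = alternating s m * alternating (s + (m : Fin 2)) n := by
  induction m generalizing s with
  | zero => simp [alternating]
  | succ m ih =>
    rw [Nat.add_right_comm, alternating, ih, alternating, mul_assoc]
    congr 3
    push_cast
    abel

theorem alternating_three (s : Fin 2) : alternating s 3 = delta := by
  have braid : σ 0 * σ 1 * σ 0 = σ 1 * σ 0 * σ 1 := by
    simp only [σ, ← map_mul]
    exact (Con.eq _).2 (ConGen.Rel.of _ _ ⟨rfl, rfl⟩)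
  fin_cases s
  · rfl
  · simpa [delta, alternating, mul_assoc] using braid.symm

theorem alternating_mul_alternating_eq_delta (s : Fin 2) {i : ℕ} (hi : i ≤ 3) :
    alternating s i * alternating (s + (i : Fin 2)) (3 - i) = delta := by
  rw [← alternating_add, Nat.add_sub_cancel' hi, alternating_three]

theorem σ_dvd_alternating (s : Fin 2) {i : ℕ} (hi : i ≠ 0) : σ s ∣ alternating s i := by
  obtain ⟨n, rfl⟩ := Nat.exists_eq_succ_of_ne_zero hi
  exact dvd_mul_right _ _

theorem isRightLcm_σ_σ_add_one (s : Fin 2) : IsRightLcm (σ s) (σ (s + 1)) delta := by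
  refine isRightLcm_iff_dvd.2 ⟨?_, ?_, ?_⟩
  · rw [← alternating_three s]; exact σ_dvd_alternating s three_ne_zero
  · rw [← alternating_three (s + 1)]; exact σ_dvd_alternating _ three_ne_zero
  · rintro k ⟨y, rfl⟩ ⟨z, h⟩
    obtain ⟨w, rfl⟩ := σ_add_one_mul_σ_dvd_of_σ_mul_eq h
    have hs : s + 1 + 1 = s := by fin_cases s <;> rfl
    exact ⟨w, by rw [← alternating_three s]; simp [alternating, hs, mul_assoc]⟩

theorem alternating_mem_simples (s : Fin 2) {i : ℕ} (hi : i ≤ 3) : alternating s i ∈ simples :=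
  ⟨s, i, hi, rfl⟩

theorem exists_isRightLcm_alternating_alternating (s : Fin 2) {i j : ℕ} (hi : i ≤ 3) (hj : j ≤ 3) :
    ∃ l z, IsRightLcm (alternating s i) (alternating s j) l ∧ l ∈ simples ∧
      alternating s i * z = l ∧ z ∈ simples := by
  rcases le_total i j with hij | hji
  · obtain ⟨k, rfl⟩ := Nat.exists_eq_add_of_le hij
    exact ⟨_, _, .of_dvd ⟨_, alternating_add s i k⟩, alternating_mem_simples s hj,
      (alternating_add s i k).symm, alternating_mem_simples _ (by omega)⟩
  · obtain ⟨k, rfl⟩ := Nat.exists_eq_add_of_le hji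
    exact ⟨_, 1, (IsRightLcm.of_dvd ⟨_, alternating_add s j k⟩).symm,
      alternating_mem_simples s hi, mul_one _, alternating_mem_simples s (Nat.zero_le 3)⟩

theorem exists_isRightLcm_alternating_alternating_add_one (s : Fin 2) {i j : ℕ} (hi₀ : i ≠ 0)
    (hi : i ≤ 3) (hj₀ : j ≠ 0) (hj : j ≤ 3) :
    ∃ l z, IsRightLcm (alternating s i) (alternating (s + 1) j) l ∧ l ∈ simples ∧
      alternating s i * z = l ∧ z ∈ simples :=
  ⟨delta, _, (isRightLcm_σ_σ_add_one s).of_dvd_of_dvd (σ_dvd_alternating s hi₀)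
      (σ_dvd_alternating _ hj₀) ⟨_, (alternating_mul_alternating_eq_delta s hi).symm⟩
      ⟨_, (alternating_mul_alternating_eq_delta _ hj).symm⟩,
    alternating_three 0 ▸ alternating_mem_simples 0 le_rfl,
    alternating_mul_alternating_eq_delta s hi, alternating_mem_simples _ (Nat.sub_le 3 i)⟩

theorem exists_isRightLcm_of_mem_simples {x y : BraidMonoid3} (hx : x ∈ simples)
    (hy : y ∈ simples) :
    ∃ l z, IsRightLcm x y l ∧ l ∈ simples ∧ x * z = l ∧ z ∈ simples := by
  obtain ⟨s, i, hi, rfl⟩ := hx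
  obtain ⟨t, j, hj, rfl⟩ := hy
  obtain rfl | rfl : s = t ∨ t = s + 1 := by omega
  · exact exists_isRightLcm_alternating_alternating s hi hj
  rcases eq_or_ne i 0 with rfl | hi₀
  · exact exists_isRightLcm_alternating_alternating (s + 1) (Nat.zero_le 3) hj
  rcases eq_or_ne j 0 with rfl | hj₀
  · exact exists_isRightLcm_alternating_alternating s hi (Nat.zero_le 3)
  exact exists_isRightLcm_alternating_alternating_add_one s hi₀ hi hj₀ hj

theorem simples_eq :
    simples = {1, σ 0, σ 1, σ 0 * σ 1, σ 1 * σ 0, σ 0 * σ 1 * σ 0} := by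
  ext x
  constructor
  · rintro ⟨s, i, hi, rfl⟩
    interval_cases i
    · simp [alternating]
    · fin_cases s <;> simp [alternating]
    · fin_cases s <;> simp [alternating]
    · rw [alternating_three]
      simp [delta, alternating, mul_assoc]
  · rintro (rfl | rfl | rfl | rfl | rfl | rfl)
    exacts [⟨0, 0, by norm_num, rfl⟩, ⟨0, 1, by norm_num, mul_one _⟩,
      ⟨1, 1, by norm_num, mul_one _⟩, ⟨0, 2, by norm_num, by simp [alternating]⟩,
      ⟨1, 2, by norm_num, by simp [alternating]⟩, ⟨0, 3, le_rfl, by simp [alternating, mul_assoc]⟩]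

end BraidMonoid3

/-- In `B3⁺`, the set `S = {1, a, b, ab, ba, aba}` is closed under right-lcms
and right-complements: any two elements of `S` admitting a common
right-multiple have a right-lcm in `S`, and the corresponding complement also
lies in `S`. -/
theorem braid3_garside_family_closed :
    let a : BraidMonoid3 := (conGen braidRel).mk' (FreeMonoid.of 0)
    let b : BraidMonoid3 := (conGen braidRel).mk' (FreeMonoid.of 1)
    let S : Set BraidMonoid3 := {1, a, b, a * b, b * a, a * b * a}
    ∀ x ∈ S, ∀ y ∈ S,
      (∃ m, (∃ z, x * z = m) ∧ (∃ z, y * z = m)) →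
      ∃ l z : BraidMonoid3, IsRightLcm x y l ∧ l ∈ S ∧ x * z = l ∧ z ∈ S := by
  intro a b S
  rw [show S = BraidMonoid3.simples from BraidMonoid3.simples_eq.symm]
  exact fun x hx y hy _ => BraidMonoid3.exists_isRightLcm_of_mem_simples hx hy
end
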